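/- There exists a constant C > 0 (depending only on K) such that for all λ > 0 and x > 0: | 2x · ∂²Ĉ/∂x²(λ, x) + x² · ∂³Ĉ/∂x³(λ, x) | ≤ C x^{−1/2} (1 + λ^{−1}) e^{−λ/8}. Equivalently, the spatial derivative of A(λ, x) = x² ∂²Ĉ/∂x²(λ, x) is bounded by C x^{−1/2} (1 + λ^{−1}) e^{−λ/8}. -/

import Mathlib

open MeasureTheory

/-- Standard normal density φ(a) = (2π)^{−1/2} e^{−a²/2}. -/
noncomputable def stdNormalPdf (a : ℝ) : ℝ :=
  (Real.sqrt (2 * Real.pi))⁻¹ * Real.exp (-(a ^ 2) / 2)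

/-- Standard normal distribution function Φ(a) = ∫_{−∞}^a φ(s) ds. -/
noncomputable def stdNormalCdf (a : ℝ) : ℝ :=
  ∫ s in Set.Iio a, stdNormalPdf s

/-- d(λ, x) = ln(x/K)/√λ + √λ/2. -/
noncomputable def bsD (K lam x : ℝ) : ℝ :=
  Real.log (x / K) / Real.sqrt lam + Real.sqrt lam / 2

/-- Black–Scholes call price with strike K, zero interest rate and total
remaining variance λ: Ĉ(λ, x) = x Φ(d(λ, x)) − K Φ(d(λ, x) − √λ). -/
noncomputable def bsPrice (K lam x : ℝ) : ℝ :=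
  x * stdNormalCdf (bsD K lam x) - K * stdNormalCdf (bsD K lam x - Real.sqrt lam)

/-!
Write `d = t + √λ / 2` with `t = log (x / K) / √λ`. The identity `x φ(d) = K φ(d - √λ)` makes
the delta equal to `Φ(d)`, so `A = x² ∂²Ĉ/∂x² = x φ(d) / √λ` and `∂A/∂x = φ(d) (1/2 - t/√λ) / √λ`.
Completing the square, `φ(d) = φ(t) √K x^(-1/2) e^(-λ/8)`; since `φ(t)` and `|t| φ(t)` are bounded,
what remains is `1/√λ + 1/λ`, which is at most a multiple of `1 + 1/λ`.
-/

open Real Filter Topology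

lemma stdNormalPdf_nonneg (a : ℝ) : 0 ≤ stdNormalPdf a := by
  unfold stdNormalPdf; positivity

lemma continuous_stdNormalPdf : Continuous stdNormalPdf := by
  unfold stdNormalPdf; fun_prop

lemma integrable_stdNormalPdf : Integrable stdNormalPdf := by
  have h : stdNormalPdf = fun a => (√(2 * π))⁻¹ * exp (-(1 / 2 : ℝ) * a ^ 2) := by
    funext a; unfold stdNormalPdf; ring_nf
  rw [h]
  exact (integrable_exp_neg_mul_sq (by norm_num)).const_mul _

lemma hasDerivAt_stdNormalCdf (a : ℝ) : HasDerivAt stdNormalCdf (stdNormalPdf a) a := by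
  have hprim : HasDerivAt (fun b => ∫ t in (0 : ℝ)..b, stdNormalPdf t) (stdNormalPdf a) a :=
    intervalIntegral.integral_hasDerivAt_right integrable_stdNormalPdf.intervalIntegrable
      continuous_stdNormalPdf.aestronglyMeasurable.stronglyMeasurableAtFilter
      continuous_stdNormalPdf.continuousAt
  refine (hprim.const_add (stdNormalCdf 0)).congr_of_eventuallyEq (Eventually.of_forall fun b => ?_)
  show stdNormalCdf b = stdNormalCdf 0 + _
  rw [← intervalIntegral.integral_Iio_sub_Iio' integrable_stdNormalPdf.integrableOn
    integrable_stdNormalPdf.integrableOn]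
  simp only [stdNormalCdf]
  ring

lemma hasDerivAt_stdNormalPdf (a : ℝ) : HasDerivAt stdNormalPdf (-a * stdNormalPdf a) a := by
  have hexp : HasDerivAt (fun b : ℝ => -(b ^ 2) / 2) (-a) a := by
    simpa using ((hasDerivAt_pow 2 a).neg.div_const 2).congr_deriv (by ring)
  exact (hexp.exp.const_mul _).congr_deriv (by unfold stdNormalPdf; ring)

lemma stdNormalPdf_add (a b : ℝ) :
    stdNormalPdf (a + b) = stdNormalPdf a * exp (-(a * b) - b ^ 2 / 2) := by
  unfold stdNormalPdf
  rw [mul_assoc, ← exp_add]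
  ring_nf

lemma stdNormalPdf_le (a : ℝ) : stdNormalPdf a ≤ (√(2 * π))⁻¹ := by
  unfold stdNormalPdf
  have : exp (-(a ^ 2) / 2) ≤ 1 := exp_le_one_iff.2 (by nlinarith [sq_nonneg a])
  exact mul_le_of_le_one_right (by positivity) this

lemma stdNormalPdf_mul_abs_le (a : ℝ) : stdNormalPdf a * |a| ≤ (√(2 * π))⁻¹ := by
  have habs : |a| ≤ exp (a ^ 2 / 2) := by
    nlinarith [add_one_le_exp (a ^ 2 / 2), sq_abs a, sq_nonneg (|a| - 1)]
  have hcancel : exp (-(a ^ 2) / 2) * exp (a ^ 2 / 2) = 1 := by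
    rw [← exp_add]; ring_nf; exact exp_zero
  calc stdNormalPdf a * |a| ≤ stdNormalPdf a * exp (a ^ 2 / 2) :=
        mul_le_mul_of_nonneg_left habs (stdNormalPdf_nonneg a)
    _ = (√(2 * π))⁻¹ := by unfold stdNormalPdf; rw [mul_assoc, hcancel, mul_one]

lemma stdNormalPdf_mul_abs_half_sub_div_le (a : ℝ) {s : ℝ} (hs : 0 < s) :
    stdNormalPdf a * |1 / 2 - a / s| / s ≤ 3 / 2 * (√(2 * π))⁻¹ * (1 + (s ^ 2)⁻¹) := by
  have hc : 0 ≤ (√(2 * π))⁻¹ := by positivity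
  have htri : |1 / 2 - a / s| ≤ 1 / 2 + |a| / s := by
    simpa [abs_div, abs_of_pos hs] using abs_sub (1 / 2 : ℝ) (a / s)
  have hinv : s⁻¹ ≤ 1 + (s ^ 2)⁻¹ := by
    rw [← inv_pow]; nlinarith [sq_nonneg (s⁻¹ - 1)]
  calc stdNormalPdf a * |1 / 2 - a / s| / s
      ≤ stdNormalPdf a * (1 / 2 + |a| / s) / s := by
        gcongr; exact stdNormalPdf_nonneg a
    _ = stdNormalPdf a * s⁻¹ / 2 + stdNormalPdf a * |a| * (s ^ 2)⁻¹ := by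
        field_simp
    _ ≤ (√(2 * π))⁻¹ * s⁻¹ / 2 + (√(2 * π))⁻¹ * (s ^ 2)⁻¹ := by
        gcongr
        exacts [stdNormalPdf_le a, stdNormalPdf_mul_abs_le a]
    _ ≤ 3 / 2 * (√(2 * π))⁻¹ * (1 + (s ^ 2)⁻¹) := by
        nlinarith [mul_le_mul_of_nonneg_left hinv hc, inv_nonneg.2 (sq_nonneg s)]

lemma two_mul_add_sq_mul_deriv_eq {g G : ℝ → ℝ} {G' x : ℝ} (hg : DifferentiableAt ℝ g x)
    (hgG : (fun y => y ^ 2 * g y) =ᶠ[𝓝 x] G) (hG : HasDerivAt G G' x) :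
    2 * x * g x + x ^ 2 * deriv g x = G' := by
  have hprod := (hasDerivAt_pow 2 x).mul hg.hasDerivAt
  rw [(hG.congr_of_eventuallyEq hgG).unique hprod]
  push_cast
  ring

section BlackScholes

variable {K lam x : ℝ}

lemma hasDerivAt_bsD (hK : K ≠ 0) (hx : x ≠ 0) :
    HasDerivAt (bsD K lam) (x * √lam)⁻¹ x := by
  have hlog : HasDerivAt (fun y => log (y / K)) x⁻¹ x :=
    ((hasDerivAt_id' x).div_const K).log (div_ne_zero hx hK) |>.congr_deriv (by field_simp)
  exact ((hlog.div_const √lam).add_const _).congr_deriv (by rw [mul_inv, div_eq_mul_inv])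

-- `d √λ = log (x / K) + λ / 2`, so the two densities differ by the factor `exp (-log (x / K))`.
lemma mul_stdNormalPdf_bsD (hK : 0 < K) (hlam : 0 < lam) (hx : 0 < x) :
    x * stdNormalPdf (bsD K lam x) = K * stdNormalPdf (bsD K lam x - √lam) := by
  have hs : √lam ≠ 0 := (sqrt_pos.2 hlam).ne'
  have hexp : -((bsD K lam x - √lam) * √lam) - √lam ^ 2 / 2 = -log (x / K) := by
    unfold bsD; field_simp; ring
  rw [← sub_add_cancel (bsD K lam x) √lam, stdNormalPdf_add, add_sub_cancel_right, hexp,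
    exp_neg, exp_log (by positivity)]
  field_simp

lemma hasDerivAt_bsPrice (hK : 0 < K) (hlam : 0 < lam) (hx : 0 < x) :
    HasDerivAt (bsPrice K lam) (stdNormalCdf (bsD K lam x)) x := by
  have hd := hasDerivAt_bsD (lam := lam) hK.ne' hx.ne'
  have hcall := (hasDerivAt_id x).mul ((hasDerivAt_stdNormalCdf _).comp x hd)
  have hput := ((hasDerivAt_stdNormalCdf _).comp x (hd.sub_const √lam)).const_mul K
  refine (hcall.sub hput).congr_deriv ?_
  simp only [id, Function.comp_apply]
  linear_combination (x * √lam)⁻¹ * mul_stdNormalPdf_bsD hK hlam hx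

lemma iteratedDeriv_two_bsPrice (hK : 0 < K) (hlam : 0 < lam) (hx : 0 < x) :
    iteratedDeriv 2 (bsPrice K lam) x = stdNormalPdf (bsD K lam x) / (x * √lam) := by
  have hdelta : deriv (bsPrice K lam) =ᶠ[𝓝 x] fun y => stdNormalCdf (bsD K lam y) := by
    filter_upwards [eventually_gt_nhds hx] with y hy
    exact (hasDerivAt_bsPrice hK hlam hy).deriv
  rw [iteratedDeriv_succ, iteratedDeriv_one, hdelta.deriv_eq]
  exact ((hasDerivAt_stdNormalCdf _).comp x (hasDerivAt_bsD hK.ne' hx.ne')).deriv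

lemma hasDerivAt_mul_stdNormalPdf_bsD (hK : K ≠ 0) (hx : x ≠ 0) :
    HasDerivAt (fun y => y * stdNormalPdf (bsD K lam y) / √lam)
      (stdNormalPdf (bsD K lam x) * (1 - bsD K lam x / √lam) / √lam) x := by
  have hpdf := (hasDerivAt_stdNormalPdf _).comp x (hasDerivAt_bsD (lam := lam) hK hx)
  refine (((hasDerivAt_id x).mul hpdf).div_const √lam).congr_deriv ?_
  simp only [id, Function.comp]
  field_simp
  ring

lemma two_mul_iteratedDeriv_two_add_sq_mul_iteratedDeriv_three_bsPrice (hK : 0 < K)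
    (hlam : 0 < lam) (hx : 0 < x) :
    2 * x * iteratedDeriv 2 (bsPrice K lam) x + x ^ 2 * iteratedDeriv 3 (bsPrice K lam) x
      = stdNormalPdf (bsD K lam x) * (1 - bsD K lam x / √lam) / √lam := by
  have hgamma : iteratedDeriv 2 (bsPrice K lam) =ᶠ[𝓝 x]
      fun y => stdNormalPdf (bsD K lam y) / (y * √lam) := by
    filter_upwards [eventually_gt_nhds hx] with y hy using iteratedDeriv_two_bsPrice hK hlam hy
  have hpdf := (hasDerivAt_stdNormalPdf _).comp x (hasDerivAt_bsD (lam := lam) hK.ne' hx.ne')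
  have hdiff : DifferentiableAt ℝ (iteratedDeriv 2 (bsPrice K lam)) x :=
    (hpdf.differentiableAt.div (by fun_prop) (by positivity)).congr_of_eventuallyEq hgamma
  rw [show iteratedDeriv 3 (bsPrice K lam) = deriv (iteratedDeriv 2 (bsPrice K lam)) from
    iteratedDeriv_succ]
  refine two_mul_add_sq_mul_deriv_eq hdiff ?_ (hasDerivAt_mul_stdNormalPdf_bsD hK.ne' hx.ne')
  filter_upwards [hgamma, eventually_gt_nhds hx] with y hy hy0
  rw [hy]
  field_simp

lemma stdNormalPdf_bsD (hK : 0 < K) (hlam : 0 < lam) (hx : 0 < x) :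
    stdNormalPdf (bsD K lam x)
      = stdNormalPdf (log (x / K) / √lam) * (√K * x ^ (-(1 / 2) : ℝ)) * exp (-lam / 8) := by
  have hs : √lam ≠ 0 := (sqrt_pos.2 hlam).ne'
  have hsplit : -(log (x / K) / √lam * (√lam / 2)) - (√lam / 2) ^ 2 / 2
      = log (x / K) * (-(1 / 2)) + -lam / 8 := by
    field_simp; rw [sq_sqrt hlam.le]; ring
  have hrpow : (x / K) ^ (-(1 / 2) : ℝ) = √K * x ^ (-(1 / 2) : ℝ) := by
    rw [div_rpow hx.le hK.le, rpow_neg hK.le, sqrt_eq_rpow, div_eq_mul_inv, inv_inv, mul_comm]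
  rw [bsD, stdNormalPdf_add, hsplit, exp_add, ← rpow_def_of_pos (by positivity), hrpow]
  ring

end BlackScholes

theorem bs_A_deriv_bound (K : ℝ) (hK : 0 < K) :
    ∃ C : ℝ, 0 < C ∧ ∀ lam x : ℝ, 0 < lam → 0 < x →
      |2 * x * iteratedDeriv 2 (bsPrice K lam) x
          + x ^ 2 * iteratedDeriv 3 (bsPrice K lam) x|
        ≤ C * x ^ (-(1 / 2) : ℝ) * (1 + lam⁻¹) * Real.exp (-lam / 8) := by
  refine ⟨3 / 2 * (√(2 * π))⁻¹ * √K, by positivity, fun lam x hlam hx => ?_⟩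
  have hs : 0 < √lam := sqrt_pos.2 hlam
  have hd : 1 - bsD K lam x / √lam = 1 / 2 - log (x / K) / √lam / √lam := by
    unfold bsD; field_simp; ring
  have hbound := stdNormalPdf_mul_abs_half_sub_div_le (log (x / K) / √lam) hs
  rw [sq_sqrt hlam.le] at hbound
  rw [two_mul_iteratedDeriv_two_add_sq_mul_iteratedDeriv_three_bsPrice hK hlam hx, hd,
    stdNormalPdf_bsD hK hlam hx]
  set t := log (x / K) / √lam
  set P := √K * x ^ (-(1 / 2) : ℝ) * exp (-lam / 8)
  have hP : 0 < P := by positivity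
  calc |stdNormalPdf t * (√K * x ^ (-(1 / 2) : ℝ)) * exp (-lam / 8) * (1 / 2 - t / √lam) / √lam|
      = P * (stdNormalPdf t * |1 / 2 - t / √lam| / √lam) := by
        rw [show ∀ y, stdNormalPdf t * (√K * x ^ (-(1 / 2) : ℝ)) * exp (-lam / 8) * y / √lam
            = P * (stdNormalPdf t * y / √lam) from fun y => by ring, abs_mul, abs_of_pos hP,
          abs_div, abs_mul, abs_of_nonneg (stdNormalPdf_nonneg t), abs_of_pos hs]
    _ ≤ P * (3 / 2 * (√(2 * π))⁻¹ * (1 + lam⁻¹)) := by gcongr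
    _ = _ := by ring
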